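/- Fix a ρ-slowly-moving reward-mean sequence μ, a temporal belief D, and an action a ∈ A with gap_{μ,D}(a) ≥ Δ. Set Δ̃ := Δ − 2ρ·Ψ_max(D) and assume Δ̃ > 0. Then for any sequence of recommendations I_1,…,I_T ∈ A, the D-weighted frequency of recommending a satisfies Σ_{t=1}^T D(t)·1[I_t = a] ≥ 1 − PReg_D(μ)/Δ̃. -/

import Mathlib

open Finset MeasureTheory ProbabilityTheory

noncomputable section

/-- A reward-mean sequence `μ` (with `μ t a` the mean reward of action `a` at time `t`)
is `ρ`-slowly-moving if consecutive mean vectors differ by at most `ρ` in sup-norm. -/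
def SlowlyMoving {T K : ℕ} (μ : Fin T → Fin K → ℝ) (ρ : ℝ) : Prop :=
  ∀ (t : Fin T) (ht : t.1 + 1 < T) (a : Fin K), |μ ⟨t.1 + 1, ht⟩ a - μ t a| ≤ ρ

/-- One-sided dispersion `Ψ_D(t) = E_{s∼D}|t-s|` of a temporal belief `D`. -/
def Psi {T : ℕ} (D : Fin T → ℝ) (t : Fin T) : ℝ :=
  ∑ s : Fin T, D s * |(t.1 : ℝ) - (s.1 : ℝ)|

/-- Max dispersion `Ψ_max(D)`: the supremum of `Ψ_D` over the smallest interval of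
time steps containing the support of `D`. -/
def PsiMax {T : ℕ} (D : Fin T → ℝ) : ℝ :=
  sSup (Psi D '' {t | ∃ t₁ t₂ : Fin T, D t₁ ≠ 0 ∧ D t₂ ≠ 0 ∧ t₁ ≤ t ∧ t ≤ t₂})

/-- Mean dispersion `Φ(D) = E_{s,t∼D}|s-t|`. -/
def PhiD {T : ℕ} (D : Fin T → ℝ) : ℝ :=
  ∑ s : Fin T, ∑ t : Fin T, D s * D t * |(s.1 : ℝ) - (t.1 : ℝ)|

/-- `W₂(D) = Σ_t D(t)²`. -/
def W2 {T : ℕ} (D : Fin T → ℝ) : ℝ := ∑ t : Fin T, (D t) ^ 2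

lemma univ_ne {K : ℕ} (hK : 2 ≤ K) : (univ : Finset (Fin K)).Nonempty :=
  ⟨⟨0, by omega⟩, mem_univ _⟩

lemma erase_ne {K : ℕ} (hK : 2 ≤ K) (a : Fin K) :
    ((univ : Finset (Fin K)).erase a).Nonempty := by
  rw [← Finset.card_pos, Finset.card_erase_of_mem (mem_univ a), Finset.card_univ,
    Fintype.card_fin]
  omega

/-- `gap_{μ,D}(a) = min_{b ≠ a} Σ_t D(t)(μ_{t,a} - μ_{t,b})`. -/
def gap {T K : ℕ} (hK : 2 ≤ K) (D : Fin T → ℝ) (μ : Fin T → Fin K → ℝ) (a : Fin K) : ℝ :=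
  ((univ : Finset (Fin K)).erase a).inf' (erase_ne hK a)
    (fun b => ∑ t : Fin T, D t * (μ t a - μ t b))

/-- `D`-weighted external regret of the recommendation sequence `I` on rewards `u`:
`max_{a} Σ_t D(t)(u_{t,a} - u_{t,I_t})`.  (Taking `u := μ` gives pseudo-regret.) -/
def extReg {T K : ℕ} (hK : 2 ≤ K) (D : Fin T → ℝ) (I : Fin T → Fin K)
    (u : Fin T → Fin K → ℝ) : ℝ :=
  (univ : Finset (Fin K)).sup' (univ_ne hK) (fun a => ∑ t : Fin T, D t * (u t a - u t (I t)))

/-- `D`-weighted swap regret: `max_{φ : A → A} Σ_t D(t)(u_{t,φ(I_t)} - u_{t,I_t})`. -/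
def swapReg {T K : ℕ} (D : Fin T → ℝ) (I : Fin T → Fin K)
    (u : Fin T → Fin K → ℝ) : ℝ :=
  (univ : Finset (Fin K → Fin K)).sup' ⟨id, mem_univ _⟩
    (fun φ => ∑ t : Fin T, D t * (u t (φ (I t)) - u t (I t)))

end

/-!
Slow movement makes `μ` `ρ`-Lipschitz in time, so averaging the gap over `D` and comparing
with any time `t` costs at most `2ρΨ_D(t) ≤ 2ρΨ_max(D)`. Hence at every time in the support of
`D`, action `a` beats every other action by at least `Δ̃`; each unit of `D`-mass spent away from
`a` therefore contributes at least `Δ̃` to the regret against `a`.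
-/

namespace SlowlyMoving

variable {T K : ℕ} {μ : Fin T → Fin K → ℝ} {ρ : ℝ}

lemma nonneg (h : SlowlyMoving μ ρ) (hT : 1 < T) (c : Fin K) : 0 ≤ ρ :=
  (abs_nonneg _).trans (h ⟨0, by omega⟩ hT c)

lemma abs_sub_le_of_eq_add (h : SlowlyMoving μ ρ) (c : Fin K) :
    ∀ (n : ℕ) (s t : Fin T), t.1 = s.1 + n → |μ t c - μ s c| ≤ ρ * n := by
  intro n
  induction n with
  | zero =>
    intro s t hst
    simp [show t = s from Fin.ext hst]
  | succ n ih =>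
    intro s t hst
    let m : Fin T := ⟨s.1 + n, by omega⟩
    have hstep := h m (by simp only [m]; omega) c
    rw [show (⟨m.1 + 1, _⟩ : Fin T) = t from Fin.ext (by simp only [m]; omega)] at hstep
    have hm := ih s m rfl
    calc |μ t c - μ s c| ≤ |μ t c - μ m c| + |μ m c - μ s c| := abs_sub_le _ _ _
      _ ≤ ρ * (n + 1 : ℕ) := by push_cast; linarith

lemma abs_sub_le (h : SlowlyMoving μ ρ) (s t : Fin T) (c : Fin K) :
    |μ t c - μ s c| ≤ ρ * |(t.1 : ℝ) - s.1| := by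
  wlog hst : s ≤ t generalizing s t
  · rw [abs_sub_comm, abs_sub_comm (t.1 : ℝ)]
    exact this t s (le_of_not_ge hst)
  have hle : s.1 ≤ t.1 := hst
  have hcast : |(t.1 : ℝ) - s.1| = ((t.1 - s.1 : ℕ) : ℝ) := by
    rw [Nat.cast_sub hle, abs_of_nonneg (by simpa using hle)]
  rw [hcast]
  exact h.abs_sub_le_of_eq_add c _ s t (by omega)

end SlowlyMoving

section Dispersion

variable {T : ℕ} (D : Fin T → ℝ)

lemma Psi_eq_zero_of_le_one (hT : T ≤ 1) (t : Fin T) : Psi D t = 0 :=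
  Finset.sum_eq_zero fun s _ => by
    rw [show t = s from Fin.ext (by omega), sub_self, abs_zero, mul_zero]

lemma PsiMax_eq_zero_of_le_one (hT : T ≤ 1) : PsiMax D = 0 := by
  have hzero : ∀ x ∈ Psi D '' {t | ∃ t₁ t₂ : Fin T, D t₁ ≠ 0 ∧ D t₂ ≠ 0 ∧ t₁ ≤ t ∧ t ≤ t₂},
      x = 0 := by
    rintro x ⟨t, -, rfl⟩
    exact Psi_eq_zero_of_le_one D hT t
  exact le_antisymm (Real.sSup_nonpos fun x hx => (hzero x hx).le)
    (Real.sSup_nonneg fun x hx => (hzero x hx).ge)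

variable {D}

lemma Psi_le_PsiMax {t : Fin T} (ht : D t ≠ 0) : Psi D t ≤ PsiMax D :=
  le_csSup ((Set.toFinite _).image _).bddAbove ⟨t, ⟨t, t, ht, ht, le_rfl, le_rfl⟩, rfl⟩

lemma mul_Psi_le_mul_PsiMax {K : ℕ} {μ : Fin T → Fin K → ℝ} {ρ : ℝ}
    (hslow : SlowlyMoving μ ρ) (c : Fin K) {t : Fin T} (ht : D t ≠ 0) :
    ρ * Psi D t ≤ ρ * PsiMax D := by
  rcases le_or_gt T 1 with hT | hT
  · rw [Psi_eq_zero_of_le_one D hT, PsiMax_eq_zero_of_le_one D hT]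
  · exact mul_le_mul_of_nonneg_left (Psi_le_PsiMax ht) (hslow.nonneg hT c)

end Dispersion

section Gap

variable {T K : ℕ} {μ : Fin T → Fin K → ℝ} {ρ : ℝ} {D : Fin T → ℝ}

lemma weighted_sum_sub_le (hslow : SlowlyMoving μ ρ) (hD0 : ∀ t, 0 ≤ D t)
    (hD1 : ∑ t, D t = 1) (a b : Fin K) (t : Fin T) :
    ∑ s, D s * (μ s a - μ s b) ≤ μ t a - μ t b + 2 * ρ * Psi D t := by
  have hterm : ∀ s, D s * (μ s a - μ s b)
      ≤ D s * (μ t a - μ t b) + 2 * ρ * (D s * |(t.1 : ℝ) - s.1|) := by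
    intro s
    have ha := abs_le.mp (hslow.abs_sub_le t s a)
    have hb := abs_le.mp (hslow.abs_sub_le t s b)
    rw [abs_sub_comm] at ha hb
    have := mul_le_mul_of_nonneg_left
      (show μ s a - μ s b ≤ μ t a - μ t b + 2 * (ρ * |(t.1 : ℝ) - s.1|) by linarith) (hD0 s)
    linarith
  calc ∑ s, D s * (μ s a - μ s b)
      ≤ ∑ s, (D s * (μ t a - μ t b) + 2 * ρ * (D s * |(t.1 : ℝ) - s.1|)) :=
        Finset.sum_le_sum fun s _ => hterm s
    _ = μ t a - μ t b + 2 * ρ * Psi D t := by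
        rw [Finset.sum_add_distrib, ← Finset.sum_mul, hD1, one_mul, ← Finset.mul_sum, Psi]

lemma gap_le_weighted_sum (hK : 2 ≤ K) {a b : Fin K} (hb : b ≠ a) :
    gap hK D μ a ≤ ∑ s, D s * (μ s a - μ s b) :=
  Finset.inf'_le (fun b => ∑ s, D s * (μ s a - μ s b)) (Finset.mem_erase.mpr ⟨hb, mem_univ b⟩)

lemma sub_PsiMax_le_of_gap (hK : 2 ≤ K) (hslow : SlowlyMoving μ ρ) (hD0 : ∀ t, 0 ≤ D t)
    (hD1 : ∑ t, D t = 1) {a b : Fin K} (hb : b ≠ a) {t : Fin T} (ht : D t ≠ 0) :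
    gap hK D μ a - 2 * ρ * PsiMax D ≤ μ t a - μ t b := by
  have h1 := gap_le_weighted_sum hK (D := D) (μ := μ) hb
  have h2 := weighted_sum_sub_le hslow hD0 hD1 a b t
  have h3 := mul_Psi_le_mul_PsiMax hslow a ht
  linarith

end Gap

lemma mul_one_sub_weight_le {T K : ℕ} {D : Fin T → ℝ} (hD0 : ∀ t, 0 ≤ D t)
    (hD1 : ∑ t, D t = 1) (f : Fin T → ℝ) (I : Fin T → Fin K) (a : Fin K) {c : ℝ}
    (hf : ∀ t, D t ≠ 0 → I t ≠ a → c ≤ f t) (hfa : ∀ t, I t = a → f t = 0) :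
    (1 - ∑ t, D t * (if I t = a then (1 : ℝ) else 0)) * c ≤ ∑ t, D t * f t := by
  nth_rw 1 [← hD1]
  rw [← Finset.sum_sub_distrib, Finset.sum_mul]
  refine Finset.sum_le_sum fun t _ => ?_
  by_cases hIt : I t = a
  · simp [hIt, hfa t hIt]
  · rcases eq_or_ne (D t) 0 with hDt | hDt
    · simp [hDt]
    · simpa [hIt] using mul_le_mul_of_nonneg_left (hf t hDt hIt) (hD0 t)

theorem stmt7_general {T K : ℕ} (hK : 2 ≤ K) (ρ Δ : ℝ)
    (μ : Fin T → Fin K → ℝ)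
    (hslow : SlowlyMoving μ ρ)
    (D : Fin T → ℝ) (hD0 : ∀ t, 0 ≤ D t) (hD1 : ∑ t, D t = 1)
    (a : Fin K) (hgap : gap hK D μ a ≥ Δ)
    (hΔ : 0 < Δ - 2 * ρ * PsiMax D)
    (I : Fin T → Fin K) :
    ∑ t : Fin T, D t * (if I t = a then (1 : ℝ) else 0)
      ≥ 1 - extReg hK D I μ / (Δ - 2 * ρ * PsiMax D) := by
  have hpointwise : ∀ t, D t ≠ 0 → I t ≠ a →
      Δ - 2 * ρ * PsiMax D ≤ μ t a - μ t (I t) := fun t ht hIt => by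
    linarith [sub_PsiMax_le_of_gap hK hslow hD0 hD1 hIt ht]
  have hfreq := mul_one_sub_weight_le hD0 hD1 (fun t => μ t a - μ t (I t)) I a hpointwise
    (fun t hIt => by simp [hIt])
  have hreg : ∑ t, D t * (μ t a - μ t (I t)) ≤ extReg hK D I μ :=
    Finset.le_sup' (fun a => ∑ t, D t * (μ t a - μ t (I t))) (mem_univ a)
  have := (le_div_iff₀ hΔ).mpr (hfreq.trans hreg)
  linarith

/-- If gap_{μ,D}(a) ≥ Δ and Δ̃ := Δ − 2ρ·Ψ_max(D) > 0, then for any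
recommendation sequence I, the D-weighted frequency of recommending a satisfies
Σ_t D(t)·1[I_t = a] ≥ 1 − PReg_D(μ)/Δ̃. -/
theorem stmt7 {T K : ℕ} (hK : 2 ≤ K) (ρ Δ : ℝ)
    (μ : Fin T → Fin K → ℝ) (hμ : ∀ t a, μ t a ∈ Set.Icc (0 : ℝ) 1)
    (hslow : SlowlyMoving μ ρ)
    (D : Fin T → ℝ) (hD0 : ∀ t, 0 ≤ D t) (hD1 : ∑ t, D t = 1)
    (a : Fin K) (hgap : gap hK D μ a ≥ Δ)
    (hΔ : 0 < Δ - 2 * ρ * PsiMax D)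
    (I : Fin T → Fin K) :
    ∑ t : Fin T, D t * (if I t = a then (1 : ℝ) else 0)
      ≥ 1 - extReg hK D I μ / (Δ - 2 * ρ * PsiMax D) :=
  stmt7_general hK ρ Δ μ hslow D hD0 hD1 a hgap hΔ I
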